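/- arXiv:2507.14112 — 2 statements merged into one kernel-verified Lean document; each statement's English description precedes it below -/
import Mathlib

section
/- The following inequality between real numbers holds: 8^{1/4} · √π · (4 − (8/7)√2) < 4 · (4π³((16/9)π − (93/35)√3))^{1/8}. (Equivalently: the defect of the barrel partition of ℝ⁸ is strictly smaller than the defect of the lens partition of ℝ⁸.) -/
open MeasureTheory Metric Set Filter Topology
open scoped ENNReal symmDiff RealInnerProductSpace

noncomputable section

/-- `d`-dimensional Euclidean space. -/
abbrev Euc (d : ℕ) : Type := EuclideanSpace ℝ (Fin d)

/-- The divergence of a vector field `φ : ℝ^d → ℝ^d`. -/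
def vdiv {d : ℕ} (φ : Euc d → Euc d) (x : Euc d) : ℝ :=
  ∑ i, fderiv ℝ φ x (EuclideanSpace.single i 1) i

/-- The perimeter `Per(E, B) = |D 1_E|(B)` of `E` relative to `B`, defined as the
outer-regularized total variation (on `B`) of the distributional derivative of the
characteristic function of `E`. -/
def perim {d : ℕ} (E B : Set (Euc d)) : ℝ≥0∞ :=
  ⨅ (U : Set (Euc d)) (_ : IsOpen U) (_ : B ⊆ U),
    ⨆ (φ : Euc d → Euc d) (_ : ContDiff ℝ 1 φ) (_ : HasCompactSupport φ)
      (_ : tsupport φ ⊆ U) (_ : ∀ x, ‖φ x‖ ≤ 1),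
      ENNReal.ofReal (∫ x in E, vdiv φ x)

/-- A Caccioppoli set: a measurable set with locally finite perimeter. -/
def Caccioppoli {d : ℕ} (E : Set (Euc d)) : Prop :=
  MeasurableSet E ∧ ∀ r : ℝ, 0 < r → perim E (ball 0 r) < ⊤

/-- An `N`-partition of `ℝ^d`: measurable regions, pairwise Lebesgue-disjoint,
whose union has full measure. -/
structure IsPartition {d N : ℕ} (E : Fin N → Set (Euc d)) : Prop where
  meas : ∀ j, MeasurableSet (E j)
  disj : ∀ i j, i ≠ j → volume (E i ∩ E j) = 0
  full : volume ((univ : Set (Euc d)) \ ⋃ j, E j) = 0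

/-- Perimeter of a partition in `B`: half the sum of the perimeters of the regions. -/
def partPerim {d N : ℕ} (E : Fin N → Set (Euc d)) (B : Set (Euc d)) : ℝ≥0∞ :=
  (∑ k, perim (E k) B) / 2

/-- `E` is `J`-isoperimetric in the (closed) set `X`. -/
def IsJIsoperimetric {d N : ℕ} (E : Fin N → Set (Euc d)) (X : Set (Euc d))
    (J : Set (Fin N)) : Prop :=
  ∀ K : Set (Euc d), IsCompact K → K ⊆ X →
    ∀ F : Fin N → Set (Euc d), IsPartition F →
      (∀ j, (F j) ∆ (E j) ⊆ K) →
      (∀ j ∈ J, volume (F j ∩ K) = volume (E j ∩ K)) →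
      partPerim E K ≤ partPerim F K

/-- `E` is isoperimetric: `J`-isoperimetric in `ℝ^d` with `J` the finite-volume regions. -/
def IsIsoperimetric {d N : ℕ} (E : Fin N → Set (Euc d)) : Prop :=
  IsJIsoperimetric E univ {j | volume (E j) ≠ ⊤}

/-- `L¹_loc` convergence of a family of sets along a filter. -/
def SetTendstoL1loc {d : ℕ} {ι : Type*} (l : Filter ι) (A : ι → Set (Euc d))
    (A' : Set (Euc d)) : Prop :=
  ∀ B : Set (Euc d), MeasurableSet B → Bornology.IsBounded B →
    Tendsto (fun n => volume ((A n ∆ A') ∩ B)) l (𝓝 0)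

/-- `L¹_loc` convergence of partitions. -/
def PartTendstoL1loc {d N : ℕ} {ι : Type*} (l : Filter ι) (E : ι → Fin N → Set (Euc d))
    (F : Fin N → Set (Euc d)) : Prop :=
  ∀ j, SetTendstoL1loc l (fun n => E n j) (F j)

/-- The translate `E - x`. -/
def tr {d : ℕ} (E : Set (Euc d)) (x : Euc d) : Set (Euc d) := (fun y => y + x) ⁻¹' E

/-- The dilation `E / r`. -/
def dil {d : ℕ} (E : Set (Euc d)) (r : ℝ) : Set (Euc d) := (fun y => r • y) ⁻¹' E

/-- A (positively homogeneous) cone with vertex at the origin. -/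
def IsCone {d : ℕ} (C : Set (Euc d)) : Prop := ∀ t : ℝ, 0 < t → ∀ x ∈ C, t • x ∈ C

/-- The measure-theoretic representative of a set: its points of essential closure. -/
def essCl {d : ℕ} (E : Set (Euc d)) : Set (Euc d) :=
  {x | ∀ r > 0, 0 < volume (E ∩ ball x r)}

open Real

/-! Numerically the barrel defect is about 7.11 and the lens defect about 7.29, so both are
compared with 7.2; two-decimal bounds on `π`, `√2`, `√3` and monotonicity suffice. -/

lemma eight_rpow_one_div_four_lt : (8 : ℝ) ^ ((1 : ℝ) / 4) < 1.69 := by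
  rw [one_div, rpow_inv_lt_iff_of_pos (by norm_num) (by norm_num) (by norm_num)]
  norm_num

lemma sqrt_pi_lt : √π < 1.78 :=
  (sqrt_lt' (by norm_num)).2 (by linarith [pi_lt_d2])

lemma barrel_defect_lt_seven_point_two :
    (8 : ℝ) ^ ((1 : ℝ) / 4) * √π * (4 - (8 / 7) * √2) < 7.2 := by
  have h2_gt : 1.41 < √2 := lt_sqrt_of_sq_lt (by norm_num)
  have h2_lt : √2 < 1.5 := (sqrt_lt' (by norm_num)).2 (by norm_num)
  calc (8 : ℝ) ^ ((1 : ℝ) / 4) * √π * (4 - (8 / 7) * √2)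
      < 1.69 * 1.78 * 2.39 := by
        gcongr
        · linarith
        · exact eight_rpow_one_div_four_lt
        · exact sqrt_pi_lt
        · linarith
    _ < 7.2 := by norm_num

lemma one_point_eight_pow_eight_lt_lens_radicand :
    (1.8 : ℝ) ^ 8 < 4 * π ^ 3 * ((16 / 9) * π - (93 / 35) * √3) := by
  have hπ : 3.14 < π := pi_gt_d2
  have h3_lt : √3 < 1.733 := (sqrt_lt' (by norm_num)).2 (by norm_num)
  calc (1.8 : ℝ) ^ 8 < 4 * 3.14 ^ 3 * ((16 / 9) * 3.14 - (93 / 35) * 1.733) := by norm_num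
    _ < 4 * π ^ 3 * ((16 / 9) * π - (93 / 35) * √3) := by gcongr

lemma seven_point_two_lt_lens_defect :
    7.2 < 4 * (4 * π ^ 3 * ((16 / 9) * π - (93 / 35) * √3)) ^ ((1 : ℝ) / 8) := by
  have h := one_point_eight_pow_eight_lt_lens_radicand
  suffices (1.8 : ℝ) < (4 * π ^ 3 * ((16 / 9) * π - (93 / 35) * √3)) ^ ((1 : ℝ) / 8) by
    linarith
  rw [one_div, lt_rpow_inv_iff_of_pos (by norm_num) ((pow_pos (by norm_num) 8).trans h).le
    (by norm_num)]
  exact_mod_cast h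

/-- The defect of the barrel partition of `ℝ⁸` is strictly smaller than the defect of
the lens partition of `ℝ⁸`. -/
theorem barrel_defect_lt_lens_defect :
    (8 : ℝ) ^ ((1 : ℝ) / 4) * Real.sqrt Real.pi * (4 - (8 / 7) * Real.sqrt 2) <
      4 * (4 * Real.pi ^ 3 * ((16 / 9) * Real.pi - (93 / 35) * Real.sqrt 3)) ^ ((1 : ℝ) / 8) :=
  barrel_defect_lt_seven_point_two.trans seven_point_two_lt_lens_defect
end
end

section
/- In ℝ⁸ with e₈ = (0,…,0,1), let L₁ = B₁(e₈/2) ∩ B₁(−e₈/2) be the intersection of the two open unit balls centered at ±e₈/2. Then the Lebesgue measure of L₁ equals |L₁| = π⁴/36 − (93/2240)√3 · π³. -/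
/-!
Slice the lens by the hyperplanes orthogonal to `e₈`. The slice at height `t` is the 7-ball of
radius `√(1 - (|t| + 1/2)²)`, so by Fubini `|L₁| = ω₇ ∫ (1 - (|t| + 1/2)²)^(7/2) dt`, where
`ω₇ = 16π³/105`. By symmetry this is `2ω₇ ∫_{1/2}^1 (1 - u²)^(7/2) du`, and the reduction formula
gives `∫_{1/2}^1 (1 - u²)^(7/2) du = 35π/384 - 279√3/2048`.
-/

open MeasureTheory Metric Set Filter Topology
open scoped ENNReal symmDiff RealInnerProductSpace

noncomputable section

/-- The last standard basis vector `e₈ = (0,…,0,1)` of `ℝ⁸`. -/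
def e8 : Euc 8 := EuclideanSpace.single (7 : Fin 8) (1 : ℝ)

namespace Euc

def snoc {n : ℕ} (y : Euc n) (t : ℝ) : Euc (n + 1) :=
  WithLp.toLp 2 (Fin.snoc (α := fun _ => ℝ) y.ofLp t)

theorem dist_snoc_snoc {n : ℕ} (x y : Euc n) (s t : ℝ) :
    dist (snoc x s) (snoc y t) = √(dist x y ^ 2 + (s - t) ^ 2) := by
  rw [EuclideanSpace.dist_eq, EuclideanSpace.dist_eq, Real.sq_sqrt (by positivity),
    Fin.sum_univ_castSucc]
  simp [snoc, Real.dist_eq, sq_abs]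

theorem measurePreserving_snoc {n : ℕ} :
    MeasurePreserving (fun p : ℝ × Euc n => snoc p.2 p.1) := by
  rw [Measure.volume_eq_prod]
  convert (PiLp.volume_preserving_toLp (Fin (n + 1))).comp
    ((volume_preserving_piFinSuccAbove (fun _ : Fin (n + 1) => ℝ) (Fin.last n)).symm.comp
      ((MeasurePreserving.id volume).prod (PiLp.volume_preserving_ofLp (Fin n)))) using 1
  ext p : 1
  simp [snoc, MeasurableEquiv.piFinSuccAbove_symm_apply]
  rfl

theorem volume_eq_lintegral_volume_snoc_preimage {n : ℕ} {s : Set (Euc (n + 1))}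
    (hs : MeasurableSet s) :
    volume s = ∫⁻ t, volume ((snoc · t) ⁻¹' s) := by
  rw [← measurePreserving_snoc.measure_preimage hs.nullMeasurableSet, Measure.volume_eq_prod,
    Measure.prod_apply (hs.preimage measurePreserving_snoc.measurable)]
  rfl

theorem snoc_preimage_ball {n : ℕ} (c : Euc n) (a t : ℝ) {r : ℝ} (hr : 0 ≤ r) :
    (snoc · t) ⁻¹' ball (snoc c a) r = ball c √(r ^ 2 - (t - a) ^ 2) := by
  ext y
  simp only [mem_preimage, mem_ball, dist_snoc_snoc, Real.lt_sqrt dist_nonneg, lt_sub_iff_add_lt]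
  exact Real.sqrt_lt (by positivity) hr

end Euc

theorem smul_e8 (c : ℝ) : c • e8 = Euc.snoc 0 c := by
  have he8 : e8 = EuclideanSpace.single (Fin.last 7) 1 := rfl
  ext i
  induction i using Fin.lastCases <;> simp [he8, Euc.snoc, -Fin.reduceLast]

theorem lens_slice (t : ℝ) :
    (Euc.snoc · t) ⁻¹' (ball ((1 / 2 : ℝ) • e8) 1 ∩ ball (-((1 / 2 : ℝ) • e8)) 1) =
      ball 0 √(1 - (|t| + 1 / 2) ^ 2) := by
  rw [← neg_smul, smul_e8, smul_e8, preimage_inter, Euc.snoc_preimage_ball _ _ _ zero_le_one,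
    Euc.snoc_preimage_ball _ _ _ zero_le_one, one_pow]
  rcases le_total 0 t with ht | ht
  · rw [inter_eq_right.mpr (ball_subset_ball (Real.sqrt_le_sqrt (by nlinarith))), abs_of_nonneg ht]
    ring_nf
  · rw [inter_eq_left.mpr (ball_subset_ball (Real.sqrt_le_sqrt (by nlinarith))), abs_of_nonpos ht]
    ring_nf

theorem volume_ball_fin_seven (x : Euc 7) (r : ℝ) :
    volume (ball x r) = .ofReal r ^ 7 * .ofReal (16 * Real.pi ^ 3 / 105) := by
  rw [InnerProductSpace.volume_ball_of_dim_odd (k := 3) (by simp), finrank_euclideanSpace_fin]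
  norm_num [Nat.doubleFactorial, mul_comm]

theorem integral_comp_abs_add {f : ℝ → ℝ} {a b : ℝ} (hab : a ≤ b) (hf : ∀ x, b < x → f x = 0) :
    ∫ t, f (|t| + a) = 2 * ∫ u in a..b, f u := by
  rw [integral_comp_abs (f := fun t => f (t + a)),
    setIntegral_eq_of_subset_of_forall_sdiff_eq_zero (s := Ioc 0 (b - a)) measurableSet_Ioi
      Ioc_subset_Ioi_self fun x hx => hf _ (by
        have : ¬x ≤ b - a := fun h => hx.2 ⟨hx.1, h⟩
        linarith),
    ← intervalIntegral.integral_of_le (by linarith), intervalIntegral.integral_comp_add_right]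
  simp

theorem integrable_comp_abs_add {f : ℝ → ℝ} (hf : Continuous f) {a b : ℝ}
    (hf₀ : ∀ x, b < x → f x = 0) : Integrable fun t => f (|t| + a) := by
  refine (hf.comp (by fun_prop)).integrable_of_hasCompactSupport
    (HasCompactSupport.intro (isCompact_Icc (a := a - b) (b := b - a)) fun x hx => hf₀ _ ?_)
  rw [mem_Icc, not_and_or, not_le, not_le] at hx
  rcases hx with hx | hx <;> linarith [neg_abs_le x, le_abs_self x]

/-- Four steps of the reduction formula
`∫ (1 - u²)^(k/2) = u (1 - u²)^(k/2) / (k + 1) + k / (k + 1) ∫ (1 - u²)^(k/2 - 1)`. -/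
def sqrtOneSubSqPowSevenPrimitive (u : ℝ) : ℝ :=
  u * √(1 - u ^ 2) ^ 7 / 8 + 7 * (u * √(1 - u ^ 2) ^ 5) / 48 +
    35 * (u * √(1 - u ^ 2) ^ 3) / 192 + 35 * (u * √(1 - u ^ 2)) / 128 + 35 * Real.arcsin u / 128

theorem hasDerivAt_sqrtOneSubSqPowSevenPrimitive {u : ℝ} (h₁ : -1 < u) (h₂ : u < 1) :
    HasDerivAt sqrtOneSubSqPowSevenPrimitive (√(1 - u ^ 2) ^ 7) u := by
  have hpos : 0 < 1 - u ^ 2 := by nlinarith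
  set s := √(1 - u ^ 2) with hs
  have hs0 : 0 < s := Real.sqrt_pos.mpr hpos
  have hs2 : s ^ 2 = 1 - u ^ 2 := Real.sq_sqrt hpos.le
  have hsqrt : HasDerivAt (fun u : ℝ => √(1 - u ^ 2)) (-u / s) u := by
    convert ((hasDerivAt_pow 2 u).const_sub 1).sqrt hpos.ne' using 1
    field_simp
    ring
  have hmul (k : ℕ) : HasDerivAt (fun u : ℝ => u * √(1 - u ^ 2) ^ k)
      (1 * s ^ k + u * (k * s ^ (k - 1) * (-u / s))) u :=
    (hasDerivAt_id' u).mul (hsqrt.fun_pow k)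
  refine HasDerivAt.congr_deriv ((((((hmul 7).div_const 8).add
    (((hmul 5).const_mul 7).div_const 48)).add (((hmul 3).const_mul 35).div_const 192)).add
    (((hasDerivAt_id' u).mul hsqrt).const_mul 35 |>.div_const 128)).add
    ((Real.hasDerivAt_arcsin h₁.ne' h₂.ne).const_mul 35 |>.div_const 128)) ?_
  rw [← hs]
  field_simp
  linear_combination -(5160960 * s ^ 2 + 6881280 * s ^ 4 + 8257536 * s ^ 6 + 2580480) * hs2

theorem integral_sqrt_one_sub_sq_pow_seven :
    ∫ u in (1 / 2 : ℝ)..1, √(1 - u ^ 2) ^ 7 = 35 * Real.pi / 384 - 279 * √3 / 2048 := by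
  have hcont : Continuous sqrtOneSubSqPowSevenPrimitive := by
    unfold sqrtOneSubSqPowSevenPrimitive
    fun_prop
  rw [intervalIntegral.integral_eq_sub_of_hasDeriv_right_of_le (by norm_num) hcont.continuousOn
    (fun u hu =>
      (hasDerivAt_sqrtOneSubSqPowSevenPrimitive (by linarith [hu.1]) hu.2).hasDerivWithinAt)
    (by apply Continuous.intervalIntegrable; fun_prop)]
  have hsqrt : √(1 - (1 / 2 : ℝ) ^ 2) = √3 / 2 := by
    rw [Real.sqrt_eq_iff_mul_self_eq (by norm_num) (by positivity), div_mul_div_comm,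
      Real.mul_self_sqrt (by norm_num)]
    norm_num
  have h3 : √3 ^ 2 = 3 := Real.sq_sqrt (by norm_num)
  have harcsin : Real.arcsin (1 / 2) = Real.pi / 6 := by
    rw [← Real.sin_pi_div_six, Real.arcsin_sin] <;> linarith [Real.pi_pos]
  simp only [sqrtOneSubSqPowSevenPrimitive, hsqrt, harcsin, Real.arcsin_one, one_pow, sub_self,
    Real.sqrt_zero]
  linear_combination -(√3 * (√3 ^ 4 + 3 * √3 ^ 2 + 9) / 2048 + 7 * √3 * (√3 ^ 2 + 3) / 3072
    + 35 * √3 / 3072) * h3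

/-- **Volume of the lens** `L₁ = B₁(e₈/2) ∩ B₁(−e₈/2)` in `ℝ⁸`. -/
theorem lens_volume :
    volume (ball ((1 / 2 : ℝ) • e8) 1 ∩ ball (-((1 / 2 : ℝ) • e8)) 1) =
      ENNReal.ofReal (Real.pi ^ 4 / 36 - (93 / 2240) * Real.sqrt 3 * Real.pi ^ 3) := by
  have hvanish (u : ℝ) (hu : 1 < u) : √(1 - u ^ 2) ^ 7 = 0 := by
    rw [Real.sqrt_eq_zero'.mpr (by nlinarith)]
    norm_num
  have hcont : Continuous fun u : ℝ => √(1 - u ^ 2) ^ 7 := by fun_prop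
  have hpos : 0 ≤ 35 * Real.pi / 384 - 279 * √3 / 2048 := by
    have : √3 < 2 := (Real.sqrt_lt' two_pos).mpr (by norm_num)
    linarith [Real.pi_gt_three]
  rw [Euc.volume_eq_lintegral_volume_snoc_preimage (isOpen_ball.inter isOpen_ball).measurableSet]
  simp_rw [lens_slice, volume_ball_fin_seven, ← ENNReal.ofReal_pow (Real.sqrt_nonneg _)]
  rw [lintegral_mul_const _ (by fun_prop),
    ← ofReal_integral_eq_lintegral_ofReal (integrable_comp_abs_add hcont hvanish)
      (ae_of_all _ fun t => by positivity),
    integral_comp_abs_add (by norm_num) hvanish, integral_sqrt_one_sub_sq_pow_seven,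
    ← ENNReal.ofReal_mul (by positivity)]
  congr 1
  ring
end
end
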